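/- arXiv:1505.02058 — 2 statements merged into one kernel-verified Lean document; each statement's English description precedes it below -/
import Mathlib

section
/- In a Coxeter system (W,S), let s ∈ S, x ∈ W and γ ∈ Φ⁺ such that sx ⋖ x and s_γ x ⋖ x in Bruhat order (both coverings). Then either γ = α_s or s·s_γ x ⋖ s_γ x. -/
/-!
Write `x = s·w` with `w` reduced. As `s_γ x < x`, the strong exchange condition says that
`s_γ x` is obtained from the word `s·w` by deleting one letter. Deleting the first letter gives
`s_γ = s`, hence `γ = ±α_s`, and positivity forces `γ = α_s`. Deleting any other letter leaves a
word of length `ℓ(x) - 1 = ℓ(s_γ x)` beginning with `s`, so `s` is a left descent of `s_γ x`.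

Strong exchange is Björner–Brenti's argument: `W` acts on `W × ZMod 2` by
`s_i · (t, ε) = (s_i t s_i, ε + [t = s_i])`, and the second coordinate of `π(ω) · (t, 0)` is the
parity of the number of occurrences of `t` in the right inversion sequence of `ω`. So this parity
depends only on `π(ω)`, and the cocycle identity shows it is odd whenever `ℓ(π(ω) t) < ℓ(π(ω))`.
-/

open scoped Classical

noncomputable section

namespace CoxGar

variable {I : Type*} {W : Type*} [Group W] {M : CoxeterMatrix I}
variable {V : Type*} [AddCommGroup V] [Module ℝ V]

/-- The conic (nonnegative) hull of a set of vectors. -/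
def posSpan (A : Set V) : Set V :=
  {v | ∃ (s : Finset V) (c : V → ℝ), ↑s ⊆ A ∧ (∀ x ∈ s, 0 ≤ c x) ∧ v = ∑ x ∈ s, c x • x}

/-- `l` is a reduced word. -/
def IsRed (cs : CoxeterSystem M W) (l : List I) : Prop :=
  cs.length (cs.wordProd l) = l.length

/-- Right weak order: `u` is a prefix of `v`, i.e. some reduced word for `u` is a prefix of
some reduced word for `v`. -/
def leR (cs : CoxeterSystem M W) (u v : W) : Prop :=
  ∃ l₁ l₂ : List I, IsRed cs (l₁ ++ l₂) ∧ cs.wordProd (l₁ ++ l₂) = v ∧ cs.wordProd l₁ = u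

/-- `u` is a suffix of `v`: some reduced word for `u` is a suffix of some reduced word for `v`. -/
def IsSuffixOf (cs : CoxeterSystem M W) (u v : W) : Prop :=
  ∃ l₁ l₂ : List I, IsRed cs (l₁ ++ l₂) ∧ cs.wordProd (l₁ ++ l₂) = v ∧ cs.wordProd l₂ = u

/-- `j` is the join (least upper bound) of `X` in right weak order. -/
def IsJoin (cs : CoxeterSystem M W) (X : Set W) (j : W) : Prop :=
  (∀ x ∈ X, leR cs x j) ∧ ∀ g, (∀ x ∈ X, leR cs x g) → leR cs j g

/-- A Garside shadow in the Coxeter system `(W,S)`: a subset of `W` containing all simple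
reflections, closed under existing joins in right weak order and under taking suffixes. -/
structure IsGarsideShadow (cs : CoxeterSystem M W) (A : Set W) : Prop where
  simple_mem : ∀ i : I, cs.simple i ∈ A
  join_mem : ∀ X ⊆ A, ∀ j : W, IsJoin cs X j → j ∈ A
  suffix_mem : ∀ w ∈ A, ∀ u : W, IsSuffixOf cs u w → u ∈ A

/-- Word length with respect to an arbitrary generating set of a group. -/
def genLen (Sgen : Set W) (w : W) : ℕ :=
  sInf {n | ∃ l : List W, l.length = n ∧ (∀ x ∈ l, x ∈ Sgen) ∧ l.prod = w}

/-- A geometric representation of the Coxeter system `cs` on the quadratic space `(V,B)`: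
a faithful representation sending the simple reflections to the `B`-reflections in a
simple system `α` (positively independent unit roots with the prescribed pairings). -/
structure GeomRep (cs : CoxeterSystem M W) (V : Type*) [AddCommGroup V] [Module ℝ V] where
  B : V →ₗ[ℝ] V →ₗ[ℝ] ℝ
  symm : ∀ u v : V, B u v = B v u
  α : I → V
  norm_one : ∀ i, B (α i) (α i) = 1
  pairing_finite : ∀ i j, M i j ≠ 0 → B (α i) (α j) = - Real.cos (Real.pi / (M i j : ℝ))
  pairing_infinite : ∀ i j, M i j = 0 → B (α i) (α j) ≤ -1
  posIndep : ∀ f : I →₀ ℝ, (∀ i, 0 ≤ f i) → (f.sum fun i c => c • α i) = 0 → f = 0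
  ρ : Representation ℝ W V
  faithful : Function.Injective ρ
  ρ_simple : ∀ (i : I) (v : V), ρ (cs.simple i) v = v - (2 * B (α i) v) • α i
  ρ_isom : ∀ (w : W) (u v : V), B (ρ w u) (ρ w v) = B u v

namespace GeomRep

variable {cs : CoxeterSystem M W} (gr : GeomRep cs V)

/-- The root system `Φ`: the orbit of the simple roots. -/
def roots : Set V := {v | ∃ (w : W) (i : I), v = gr.ρ w (gr.α i)}

/-- The positive roots `Φ⁺`. -/
def posRoots : Set V := gr.roots ∩ posSpan (Set.range gr.α)

/-- The left inversion set `N(w) = Φ⁺ ∩ w(Φ⁻)`. -/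
def invSet (w : W) : Set V := {v | v ∈ gr.posRoots ∧ gr.ρ w⁻¹ v ∈ -gr.posRoots}

/-- The reflection `s_β ∈ W` associated to a root `β` (the element of `W` acting on `V` as the
`B`-reflection along `β`). -/
def rfl' (b : V) : W :=
  Classical.epsilon fun t => ∀ v : V, gr.ρ t v = v - (2 * gr.B b v) • b

/-- Dominance order: `a ⪯ b` iff every inversion set containing `b` contains `a`. -/
def dominates (a b : V) : Prop := ∀ w : W, b ∈ gr.invSet w → a ∈ gr.invSet w

/-- The set of positive roots strictly dominated by `b`. -/
def domSet (b : V) : Set V := {a | a ∈ gr.posRoots ∧ gr.dominates a b ∧ a ≠ b}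

/-- The dominance depth (`∞`-depth) of a root. -/
def dpInf (b : V) : ℕ := (gr.domSet b).ncard

/-- The set `Σ_n` of `n`-small roots. -/
def smallRoots (n : ℕ) : Set V := {b | b ∈ gr.posRoots ∧ gr.dpInf b ≤ n}

/-- `w` is `n`-low: its inversion set is the set of roots in the conic hull of its
`n`-small inversion set. -/
def IsLow (n : ℕ) (w : W) : Prop :=
  gr.invSet w = posSpan (gr.invSet w ∩ gr.smallRoots n) ∩ gr.roots

/-- The set `L_n(W)` of `n`-low elements. -/
def lowSet (n : ℕ) : Set W := {w | gr.IsLow n w}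

/-- The base `N¹(w)` of the inversion set: positive roots `β` with `ℓ(s_β w) = ℓ(w) - 1`. -/
def base (w : W) : Set V :=
  {b | b ∈ gr.posRoots ∧ cs.length (gr.rfl' b * w) + 1 = cs.length w}

/-- The roots of a reflection subgroup `W'`. -/
def rootsOf (W' : Subgroup W) : Set V := {b | b ∈ gr.roots ∧ gr.rfl' b ∈ W'}

/-- The canonical simple system of a reflection subgroup `W'`. -/
def canSimples (W' : Subgroup W) : Set V :=
  {a | a ∈ gr.posRoots ∧ gr.invSet (gr.rfl' a) ∩ gr.rootsOf W' = {a}}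

/-- `{a,b}` is the canonical simple pair of a maximal dihedral reflection subgroup:
both are positive roots and the positive roots in the plane they span are exactly the
roots in their conic hull. -/
def IsMaxDihedralPair (a b : V) : Prop :=
  a ∈ gr.posRoots ∧ b ∈ gr.posRoots ∧ a ≠ b ∧
    (Submodule.span ℝ {a, b} : Set V) ∩ gr.posRoots = posSpan {a, b} ∩ gr.roots

/-- A set of positive roots is bipodal if, whenever it contains a positive non-simple root of a
maximal dihedral reflection subgroup, it contains both canonical simple roots of that subgroup. -/
def Bipodal (A : Set V) : Prop :=
  ∀ a b : V, gr.IsMaxDihedralPair a b →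
    (∃ c ∈ A, c ∈ posSpan {a, b} ∩ gr.roots ∧ c ≠ a ∧ c ≠ b) → a ∈ A ∧ b ∈ A

/-- `f_s(β)`: the root completing `α_s` to the canonical simple pair of the maximal dihedral
reflection subgroup containing `s` and `s_β`. -/
def fRoot (i : I) (b : V) : V :=
  Classical.epsilon fun c => c ∈ gr.posRoots ∧
    (Submodule.span ℝ {gr.α i, b} : Set V) ∩ gr.posRoots = posSpan {gr.α i, c} ∩ gr.roots

/-- The `X`-length of a positive root. -/
def dXpos (X : Set ℝ) (b : V) : ℕ :=
  {a | a ∈ gr.invSet (gr.rfl' b) ∧ gr.B a b ∈ X}.ncard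

/-- The `X`-length function `d_X` on the root system, with `d_X(-β) = -d_X(β)`. -/
def dX (X : Set ℝ) (b : V) : ℤ :=
  if b ∈ gr.posRoots then (gr.dXpos X b : ℤ) else -(gr.dXpos X (-b) : ℤ)

/-- Normalization of a vector to square length one. -/
def nzd (v : V) : V := (Real.sqrt (gr.B v v))⁻¹ • v

/-- A root `a` spans an extreme ray of the cone `C`. -/
def IsExtremeRayRep (C : Set V) (a : V) : Prop :=
  a ∈ C ∧ a ≠ 0 ∧ ∀ u ∈ C, ∀ v ∈ C, a ∈ posSpan {u, v} →
    (∃ c : ℝ, 0 < c ∧ u = c • a) ∨ (∃ c : ℝ, 0 < c ∧ v = c • a)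

end GeomRep

variable {cs : CoxeterSystem M W}

section ReflectionCocycle

variable (cs)

local prefix:100 "s" => cs.simple
local prefix:100 "π" => cs.wordProd
local prefix:100 "ℓ" => cs.length

lemma conj_eq_iff_eq_conj {G : Type*} [Group G] (g x c : G) :
    g * x * g⁻¹ = c ↔ x = g⁻¹ * c * g := by
  constructor <;> rintro rfl <;> group

lemma simple_conj_eq_iff (i : I) (t c : W) : s i * t * s i = c ↔ t = s i * c * s i := by
  have h := conj_eq_iff_eq_conj (s i) t c
  rwa [cs.inv_simple] at h

lemma simple_conj_eq_simple_iff (i : I) (t : W) : s i * t * s i = s i ↔ t = s i := by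
  rw [simple_conj_eq_iff, cs.simple_mul_simple_self, one_mul]

lemma simple_conj_simple_conj (i : I) (t : W) : s i * (s i * t * s i) * s i = t := by
  simp [← mul_assoc]

def reflPerm (i : I) : Equiv.Perm (W × ZMod 2) :=
  Function.Involutive.toPerm (fun p => (s i * p.1 * s i, p.2 + if p.1 = s i then 1 else 0)) <| by
    rintro ⟨t, ε⟩
    simp only [simple_conj_simple_conj, simple_conj_eq_simple_iff, add_assoc,
      CharTwo.add_self_eq_zero, add_zero]

lemma reflPerm_apply (i : I) (t : W) (ε : ZMod 2) :
    reflPerm cs i (t, ε) = (s i * t * s i, ε + if t = s i then 1 else 0) := rfl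

lemma simple_conj_mul_simple_pow (i j : I) (k : ℕ) :
    s j * (s i * s j) ^ k * s j = (s i * s j)⁻¹ ^ k := by
  have h : s j * (s i * s j) * (s j)⁻¹ = (s i * s j)⁻¹ := by simp [mul_assoc]
  calc s j * (s i * s j) ^ k * s j = s j * (s i * s j) ^ k * (s j)⁻¹ := by rw [cs.inv_simple]
    _ = (s i * s j)⁻¹ ^ k := by rw [← conj_pow, h]

lemma simple_mul_simple_pow_conj (i j : I) (n : ℕ) :
    ((s i * s j) ^ n)⁻¹ * s j * (s i * s j) ^ n = (s i * s j)⁻¹ ^ (2 * n) * s j := by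
  have h := simple_conj_mul_simple_pow cs i j n
  calc ((s i * s j) ^ n)⁻¹ * s j * (s i * s j) ^ n
      = ((s i * s j) ^ n)⁻¹ * (s j * (s i * s j) ^ n * s j) * s j := by
        simp [mul_assoc]
    _ = (s i * s j)⁻¹ ^ (2 * n) * s j := by rw [h, ← inv_pow, two_mul, pow_add]

lemma reflPerm_mul_pow_apply (i j : I) (k : ℕ) (t : W) (ε : ZMod 2) :
    ((reflPerm cs i * reflPerm cs j) ^ k) (t, ε) =
      ((s i * s j) ^ k * t * ((s i * s j) ^ k)⁻¹,
        ε + ∑ r ∈ Finset.range (2 * k), if t = (s i * s j)⁻¹ ^ r * s j then 1 else 0) := by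
  induction k with
  | zero => simp
  | succ k ih =>
    set g := s i * s j with hg
    have hconj := simple_mul_simple_pow_conj cs i j k
    rw [← hg] at hconj
    have hji : s j * s i = g⁻¹ := by simp [hg]
    have h₁ : g ^ k * t * (g ^ k)⁻¹ = s j ↔ t = g⁻¹ ^ (2 * k) * s j := by
      rw [conj_eq_iff_eq_conj, hconj]
    have h₂ : s j * (g ^ k * t * (g ^ k)⁻¹) * s j = s i ↔ t = g⁻¹ ^ (2 * k + 1) * s j := by
      have h : (g ^ k)⁻¹ * (g⁻¹ * s j) * g ^ k = g⁻¹ * ((g ^ k)⁻¹ * s j * g ^ k) := by group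
      rw [simple_conj_eq_iff, hji, conj_eq_iff_eq_conj, h, hconj, pow_succ', mul_assoc]
    rw [pow_succ', Equiv.Perm.mul_apply, ih, Equiv.Perm.mul_apply, reflPerm_apply,
      reflPerm_apply, if_congr h₁ rfl rfl, if_congr h₂ rfl rfl,
      show 2 * (k + 1) = 2 * k + 1 + 1 by ring, Finset.sum_range_succ, Finset.sum_range_succ]
    refine Prod.ext ?_ ?_
    · calc s i * (s j * (g ^ k * t * (g ^ k)⁻¹) * s j) * s i
          = g * (g ^ k * t * (g ^ k)⁻¹) * (s j * s i) := by simp only [hg, mul_assoc]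
        _ = g ^ (k + 1) * t * (g ^ (k + 1))⁻¹ := by rw [hji, pow_succ']; group
    · ring

lemma isLiftable_reflPerm : M.IsLiftable (reflPerm cs) := by
  intro i j
  ext ⟨t, ε⟩ : 1
  have hg : (s i * s j)⁻¹ ^ M i j = 1 := by rw [inv_pow, cs.simple_mul_simple_pow, inv_one]
  have hperiodic : ∀ r, (s i * s j)⁻¹ ^ (M i j + r) = (s i * s j)⁻¹ ^ r := by
    intro r; rw [pow_add, hg, one_mul]
  rw [reflPerm_mul_pow_apply, two_mul, Finset.sum_range_add]
  simp only [hperiodic, CharTwo.add_self_eq_zero, add_zero, cs.simple_mul_simple_pow, one_mul,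
    inv_one, mul_one, Equiv.Perm.one_apply]

def reflRep : W →* Equiv.Perm (W × ZMod 2) := cs.lift ⟨reflPerm cs, isLiftable_reflPerm cs⟩

lemma reflRep_simple (i : I) : reflRep cs (s i) = reflPerm cs i :=
  cs.lift_apply_simple (isLiftable_reflPerm cs) i

def reflParity (w t : W) : ZMod 2 := (reflRep cs w (t, 0)).2

lemma reflRep_apply (w t : W) (ε : ZMod 2) :
    reflRep cs w (t, ε) = (w * t * w⁻¹, ε + reflParity cs w t) := by
  induction w using cs.simple_induction_left generalizing t ε with
  | one => simp [reflParity]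
  | mul_simple_left w i ih =>
    rw [reflParity, map_mul, Equiv.Perm.mul_apply, Equiv.Perm.mul_apply, ih, ih, reflRep_simple,
      reflPerm_apply, reflPerm_apply]
    refine Prod.ext ?_ ?_
    · simp [mul_assoc]
    · simp only [zero_add, add_assoc]

lemma reflParity_mul (u v t : W) :
    reflParity cs (u * v) t = reflParity cs u (v * t * v⁻¹) + reflParity cs v t := by
  have h := congrArg Prod.snd (reflRep_apply cs (u * v) t 0)
  rw [map_mul, Equiv.Perm.mul_apply, reflRep_apply, reflRep_apply] at h
  simpa [add_comm] using h.symm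

lemma reflParity_one (t : W) : reflParity cs 1 t = 0 := by simp [reflParity]

lemma reflParity_simple (i : I) (t : W) : reflParity cs (s i) t = if t = s i then 1 else 0 := by
  simp [reflParity, reflRep_simple, reflPerm_apply]

lemma reflParity_wordProd (ω : List I) (t : W) :
    reflParity cs (π ω) t = ((cs.rightInvSeq ω).count t : ZMod 2) := by
  induction ω with
  | nil => simp [reflParity_one]
  | cons i ω ih =>
    rw [cs.wordProd_cons, reflParity_mul, ih, reflParity_simple, CoxeterSystem.rightInvSeq,
      List.count_cons, if_congr (conj_eq_iff_eq_conj _ _ _) rfl rfl]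
    push_cast
    simp only [beq_iff_eq, eq_comm (a := t), add_comm]

lemma reflParity_self {t : W} (ht : cs.IsReflection t) : reflParity cs t t = 1 := by
  obtain ⟨w, i, rfl⟩ := ht
  have hcancel := reflParity_mul cs w w⁻¹ (w * s i * w⁻¹)
  have hconj : w⁻¹ * (w * s i * w⁻¹) * w⁻¹⁻¹ = s i := by group
  rw [mul_inv_cancel, reflParity_one, hconj] at hcancel
  rw [reflParity_mul, reflParity_mul, reflParity_simple, hconj, if_pos rfl, ← cs.inv_simple i,
    mul_inv_cancel_right, cs.inv_simple, add_right_comm, ← hcancel, zero_add]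

theorem mem_rightInvSeq_of_isRightInversion {ω : List I} {t : W}
    (ht : cs.IsRightInversion (π ω) t) : t ∈ cs.rightInvSeq ω := by
  obtain ⟨ω', hω', hπω'⟩ := cs.exists_isReduced (π ω * t)
  have ht' : t ∉ cs.rightInvSeq ω' := fun hmem => by
    have hlt := (cs.isRightInversion_of_mem_rightInvSeq hω' hmem).2
    rw [← hπω', mul_assoc, ht.1.mul_self, mul_one] at hlt
    exact lt_asymm hlt ht.2
  have hparity : reflParity cs (π ω) t = 1 := by
    calc reflParity cs (π ω) t = reflParity cs (π ω * t * t) t := by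
          rw [mul_assoc, ht.1.mul_self, mul_one]
      _ = reflParity cs (π ω') t + 1 := by
        rw [reflParity_mul, reflParity_self cs ht.1, mul_inv_cancel_right, hπω']
      _ = 1 := by rw [reflParity_wordProd, List.count_eq_zero.mpr ht', Nat.cast_zero, zero_add]
  rw [reflParity_wordProd] at hparity
  refine List.count_pos_iff.mp (Nat.pos_of_ne_zero fun h => ?_)
  rw [h, Nat.cast_zero] at hparity
  exact zero_ne_one hparity

theorem mem_leftInvSeq_of_isLeftInversion {ω : List I} {t : W}
    (ht : cs.IsLeftInversion (π ω) t) : t ∈ cs.leftInvSeq ω := by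
  rw [← cs.isRightInversion_inv_iff, ← cs.wordProd_reverse] at ht
  simpa [cs.rightInvSeq_reverse] using mem_rightInvSeq_of_isRightInversion cs ht

theorem exists_eraseIdx_of_isLeftInversion {ω : List I} {t : W}
    (ht : cs.IsLeftInversion (π ω) t) : ∃ k < ω.length, t * π ω = π (ω.eraseIdx k) := by
  obtain ⟨k, hk, hkt⟩ := List.mem_iff_getElem.mp (mem_leftInvSeq_of_isLeftInversion cs ht)
  refine ⟨k, by simpa using hk, ?_⟩
  rw [← hkt, ← List.getD_eq_getElem (d := 1), cs.getD_leftInvSeq_mul_wordProd]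

theorem eq_simple_of_isLeftDescent_of_not_isLeftDescent {x t : W} {i : I}
    (ht : cs.IsReflection t) (hcov : ℓ x = ℓ (t * x) + 1)
    (hi : cs.IsLeftDescent x i) (hti : ¬ cs.IsLeftDescent (t * x) i) : t = s i := by
  obtain ⟨ω, hω, hπω⟩ := cs.exists_isReduced (s i * x)
  have hx : x = π (i :: ω) := by
    rw [cs.wordProd_cons, ← hπω, ← mul_assoc, cs.simple_mul_simple_self, one_mul]
  obtain ⟨k, hk, htx⟩ :=
    exists_eraseIdx_of_isLeftInversion cs (ω := i :: ω) (t := t) ⟨ht, by rw [← hx]; omega⟩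
  rw [← hx] at htx
  cases k with
  | zero =>
    rw [List.eraseIdx_cons_zero, ← hπω] at htx
    exact mul_right_cancel htx
  | succ k =>
    rw [List.eraseIdx_cons_succ, cs.wordProd_cons] at htx
    have hsitx : s i * (t * x) = π (ω.eraseIdx k) := by
      rw [htx, ← mul_assoc, cs.simple_mul_simple_self, one_mul]
    have hlen := cs.length_wordProd_le (ω.eraseIdx k)
    have herase := List.length_eraseIdx_add_one (l := ω) (i := k) (by simpa using hk)
    rw [← hsitx] at hlen
    rw [← hω, ← hπω] at herase
    unfold CoxeterSystem.IsLeftDescent at hi hti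
    omega

end ReflectionCocycle

namespace GeomRep

variable (gr : GeomRep cs V)

lemma rho_conj_simple_apply (w : W) (j : I) (v : V) :
    gr.ρ (w * cs.simple j * w⁻¹) v = v - (2 * gr.B (gr.ρ w (gr.α j)) v) • gr.ρ w (gr.α j) := by
  have hB : gr.B (gr.α j) (gr.ρ w⁻¹ v) = gr.B (gr.ρ w (gr.α j)) v := by
    rw [← gr.ρ_isom w, Representation.self_inv_apply]
  simp only [map_mul, Module.End.mul_apply, gr.ρ_simple, map_sub, map_smul,
    Representation.self_inv_apply, hB]

lemma rfl'_rho_simpleRoot (w : W) (j : I) :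
    gr.rfl' (gr.ρ w (gr.α j)) = w * cs.simple j * w⁻¹ := by
  have hspec : ∀ v, gr.ρ (gr.rfl' (gr.ρ w (gr.α j))) v
      = v - (2 * gr.B (gr.ρ w (gr.α j)) v) • gr.ρ w (gr.α j) :=
    Classical.epsilon_spec (p := fun t : W => ∀ v, gr.ρ t v = _)
      ⟨_, gr.rho_conj_simple_apply w j⟩
  exact gr.faithful (LinearMap.ext fun v => by rw [hspec, gr.rho_conj_simple_apply])

lemma isReflection_rfl' {γ : V} (hγ : γ ∈ gr.roots) : cs.IsReflection (gr.rfl' γ) := by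
  obtain ⟨w, j, rfl⟩ := hγ
  exact ⟨w, j, gr.rfl'_rho_simpleRoot w j⟩

lemma rfl'_apply {γ : V} (hγ : γ ∈ gr.roots) (v : V) :
    gr.ρ (gr.rfl' γ) v = v - (2 * gr.B γ v) • γ := by
  obtain ⟨w, j, rfl⟩ := hγ
  rw [gr.rfl'_rho_simpleRoot, gr.rho_conj_simple_apply]

lemma B_self_of_mem_roots {γ : V} (hγ : γ ∈ gr.roots) : gr.B γ γ = 1 := by
  obtain ⟨w, j, rfl⟩ := hγ
  rw [gr.ρ_isom, gr.norm_one]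

lemma neg_simpleRoot_not_mem_posSpan (i : I) : -gr.α i ∉ posSpan (Set.range gr.α) := by
  rintro ⟨S, c, hS, hc, hsum⟩
  have : Nonempty I := ⟨i⟩
  have hinv : ∀ u ∈ S, gr.α (Function.invFun gr.α u) = u := fun u hu =>
    Function.invFun_eq (hS hu)
  set f : I →₀ ℝ := ∑ u ∈ S, Finsupp.single (Function.invFun gr.α u) (c u)
  have hf : 0 ≤ f := Finset.sum_nonneg fun u hu => Finsupp.single_nonneg.mpr (hc u hu)
  have hcomb : Finsupp.linearCombination ℝ gr.α (f + Finsupp.single i 1) = 0 := by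
    simp only [f, map_add, map_sum, Finsupp.linearCombination_single, one_smul]
    rw [Finset.sum_congr rfl fun u hu => by rw [hinv u hu], ← hsum, neg_add_cancel]
  have hzero := gr.posIndep (f + Finsupp.single i 1)
    (fun k => add_nonneg (hf k) (Finsupp.single_nonneg.mpr zero_le_one k))
    (by rw [← Finsupp.linearCombination_apply, hcomb])
  have hi := congrArg (· i) hzero
  simp only [Finsupp.add_apply, Finsupp.single_eq_same, Finsupp.coe_zero, Pi.zero_apply] at hi
  linarith [show 0 ≤ f i from hf i]

lemma eq_simpleRoot_of_rfl'_eq_simple {γ : V} {i : I} (hγ : γ ∈ gr.posRoots)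
    (hγi : gr.rfl' γ = cs.simple i) : γ = gr.α i := by
  set c := gr.B (gr.α i) γ
  have hγc : γ = c • gr.α i := by
    have h := gr.rfl'_apply hγ.1 γ
    rw [hγi, gr.ρ_simple, gr.B_self_of_mem_roots hγ.1, sub_right_inj] at h
    have h2 : (2 : ℝ) • γ = (2 : ℝ) • (c • gr.α i) := by rw [smul_smul, h, mul_one]
    exact smul_right_injective V two_ne_zero h2
  have hc : c * c = 1 := by
    have h := gr.B_self_of_mem_roots hγ.1
    simpa only [hγc, map_smul, LinearMap.smul_apply, gr.norm_one, smul_eq_mul, mul_one] using h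
  rcases mul_self_eq_one_iff.mp hc with h | h
  · rw [hγc, h, one_smul]
  · rw [hγc, h, neg_one_smul] at hγ
    exact absurd hγ.2 (gr.neg_simpleRoot_not_mem_posSpan i)

end GeomRep

/-- If `sx ⋖ x` and `s_γ x ⋖ x` in Bruhat order, then `γ = α_s` or `s·s_γ x ⋖ s_γ x`. -/
theorem bruhat_lifting_cor (gr : GeomRep cs V) (i : I) (x : W) (γ : V)
    (hγ : γ ∈ gr.posRoots)
    (h1 : cs.length x = cs.length (cs.simple i * x) + 1)
    (h2 : cs.length x = cs.length (gr.rfl' γ * x) + 1) :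
    γ = gr.α i ∨
      cs.length (gr.rfl' γ * x) = cs.length (cs.simple i * (gr.rfl' γ * x)) + 1 := by
  rcases cs.length_simple_mul (gr.rfl' γ * x) i with hup | hdown
  · left
    have hsimple : gr.rfl' γ = cs.simple i :=
      eq_simple_of_isLeftDescent_of_not_isLeftDescent cs (gr.isReflection_rfl' hγ.1) h2
        (cs.isLeftDescent_iff.mpr h1.symm) (cs.not_isLeftDescent_iff.mpr hup)
    exact gr.eq_simpleRoot_of_rfl'_eq_simple hγ hsimple
  · exact Or.inr hdown.symm

end CoxGar
end
end

section
/- Let s ∈ S, w ∈ W with ℓ(sw) > ℓ(w), and n ∈ ℕ. Then Σ_n(sw) = {α_s} ⊔ (Σ_n ∩ s(Σ_n(w))), where Σ_n(v) = N(v) ∩ Σ_n is the n-small inversion set of v. -/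
open scoped Classical

noncomputable section

namespace CoxGar

variable {I : Type*} {W : Type*} [Group W] {M : CoxeterMatrix I}
variable {V : Type*} [AddCommGroup V] [Module ℝ V]

variable {cs : CoxeterSystem M W}

/-!
If `ℓ(sw) > ℓ(w)` then `w⁻¹(α_s)` is a positive root (the positivity theorem for the geometric
representation, proved by induction on `ℓ(w)` after splitting off a rank-two alternating suffix of
`w`), which gives the classical decomposition `N(sw) = {α_s} ⊔ s(N(w))`. The reflection `s`
permutes the positive roots other than `α_s` and preserves dominance among them, so it maps the
roots other than `α_s` strictly dominated by `β` bijectively onto those strictly dominated by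
`s(β)`. Hence `dp_∞(β) ≤ dp_∞(s(β))` as soon as `α_s` does not dominate `β`, which is the case for
every `β ∈ N(w)` because `α_s ∉ N(w)`: an element of `s(N(w))` is small only if its preimage is.
-/

theorem mem_posSpan_of_mem {A : Set V} {x : V} (hx : x ∈ A) : x ∈ posSpan A :=
  ⟨{x}, fun _ => 1, by simpa, by simp, by simp⟩

theorem posSpan_add {A : Set V} {u v : V} (hu : u ∈ posSpan A) (hv : v ∈ posSpan A) :
    u + v ∈ posSpan A := by
  obtain ⟨s, c, hs, hc, rfl⟩ := hu
  obtain ⟨t, d, ht, hd, rfl⟩ := hv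
  refine ⟨s ∪ t, fun x => (s : Set V).indicator c x + (t : Set V).indicator d x,
    by simpa using Set.union_subset hs ht, fun x _ => ?_, ?_⟩
  · exact add_nonneg (Set.indicator_nonneg hc x) (Set.indicator_nonneg hd x)
  · have hs' := Finset.sum_indicator_subset (fun x => c x • x)
      (Finset.subset_union_left (s₁ := s) (s₂ := t))
    have ht' := Finset.sum_indicator_subset (fun x => d x • x)
      (Finset.subset_union_right (s₁ := s) (s₂ := t))
    rw [← hs', ← ht', ← Finset.sum_add_distrib]
    refine Finset.sum_congr rfl fun x _ => ?_
    rw [Set.indicator_smul_apply_left, Set.indicator_smul_apply_left, add_smul]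

theorem posSpan_smul {A : Set V} {u : V} {a : ℝ} (ha : 0 ≤ a) (hu : u ∈ posSpan A) :
    a • u ∈ posSpan A := by
  obtain ⟨s, c, hs, hc, rfl⟩ := hu
  refine ⟨s, fun x => a * c x, hs, fun x hx => mul_nonneg ha (hc x hx), ?_⟩
  simp only [Finset.smul_sum, smul_smul]

theorem exists_nonneg_linearCombination_eq {α : I → V} {u : V}
    (hu : u ∈ posSpan (Set.range α)) :
    ∃ f : I →₀ ℝ, 0 ≤ f ∧ Finsupp.linearCombination ℝ α f = u := by
  obtain ⟨s, c, hs, hc, rfl⟩ := hu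
  choose idx hidx using fun x : s => hs x.2
  refine ⟨∑ x : s, Finsupp.single (idx x) (c x),
    Finset.sum_nonneg fun x _ => Finsupp.single_nonneg.mpr (hc x x.2), ?_⟩
  simp only [map_sum, Finsupp.linearCombination_single, hidx]
  exact Finset.sum_coe_sort s fun x => c x • x

theorem Finsupp.erase_nonneg {f : I →₀ ℝ} (hf : 0 ≤ f) (i : I) : 0 ≤ f.erase i := by
  intro j
  rw [Finsupp.erase_apply]
  split_ifs
  exacts [le_rfl, hf j]

section Chebyshev

open Polynomial Chebyshev

theorem chebyshevU_eval_sub_one_nonneg_and_le {c : ℝ} (hc : 1 ≤ c) (n : ℕ) :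
    0 ≤ (U ℝ (n - 1)).eval c ∧ (U ℝ (n - 1)).eval c ≤ (U ℝ n).eval c := by
  induction n with
  | zero => simp
  | succ n ih =>
    have hrec := congrArg (eval c) (U_add_one ℝ (n : ℤ))
    simp only [eval_sub, eval_mul, eval_ofNat, eval_X] at hrec
    push_cast
    rw [add_sub_cancel_right, hrec]
    constructor <;> nlinarith

theorem chebyshevU_eval_cos_nonneg {m : ℕ} (hm : 2 ≤ m) {n : ℤ} (h0 : 0 ≤ n + 1)
    (hn : n + 1 ≤ m) : 0 ≤ (U ℝ n).eval (Real.cos (Real.pi / m)) := by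
  have hm' : (2 : ℝ) ≤ m := by exact_mod_cast hm
  have hsin : 0 < Real.sin (Real.pi / m) := by
    apply Real.sin_pos_of_pos_of_lt_pi (by positivity)
    rw [div_lt_iff₀ (by linarith)]
    nlinarith [Real.pi_pos]
  have h0' : (0 : ℝ) ≤ n + 1 := by exact_mod_cast h0
  have hn' : (n : ℝ) + 1 ≤ m := by exact_mod_cast hn
  refine nonneg_of_mul_nonneg_left ?_ hsin
  rw [U_real_cos]
  apply Real.sin_nonneg_of_nonneg_of_le_pi (mul_nonneg h0' (by positivity))
  rw [← mul_div_assoc, div_le_iff₀ (by linarith), mul_comm Real.pi]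
  exact mul_le_mul_of_nonneg_right hn' Real.pi_pos.le

end Chebyshev

section Alternating

open CoxeterSystem (alternatingWord)

theorem alternatingWord_suffix (i j : I) {t k : ℕ} (h : t ≤ k) :
    alternatingWord i j t <:+ alternatingWord i j k := by
  induction k, h using Nat.le_induction with
  | base => exact List.suffix_refl _
  | succ k _ ih =>
    rw [CoxeterSystem.alternatingWord_succ']
    exact ih.trans (List.suffix_cons _ _)

theorem length_mul_wordProd_le (cs : CoxeterSystem M W) (v : W) (l : List I) :
    cs.length (v * cs.wordProd l) ≤ cs.length v + l.length :=
  (cs.length_mul_le _ _).trans (Nat.add_le_add_left (cs.length_wordProd_le l) _)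

theorem eq_zero_or_lt_of_length_mul_alternatingWord {v : W} {i j : I} {k : ℕ}
    (hk : cs.length (v * cs.wordProd (alternatingWord i j k)) = cs.length v + k)
    (hi : cs.length (v * cs.wordProd (alternatingWord i j k) * cs.simple i) =
      cs.length (v * cs.wordProd (alternatingWord i j k)) + 1) :
    M i j = 0 ∨ k + 1 ≤ M i j := by
  by_contra! hcon
  obtain ⟨m, hm⟩ := Nat.exists_eq_succ_of_ne_zero hcon.1
  obtain ⟨l, hl⟩ := alternatingWord_suffix i j (show M i j ≤ k by omega)
  have hlen : l.length + M i j = k := by simpa using congrArg List.length hl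
  -- the braid relation moves the letter `i` to the end of the suffix `alternatingWord i j (M i j)`
  have hbraid : cs.wordProd (alternatingWord i j (M i j)) =
      cs.wordProd (alternatingWord i j m) * cs.simple i := by
    rw [cs.wordProd_braidWord_eq, CoxeterSystem.braidWord, M.symmetric, hm,
      CoxeterSystem.alternatingWord_succ, cs.wordProd_concat]
  have hshort : v * cs.wordProd (alternatingWord i j k) * cs.simple i =
      v * cs.wordProd (l ++ alternatingWord i j m) := by
    rw [← hl, cs.wordProd_append, cs.wordProd_append, hbraid, mul_assoc, mul_assoc,
      cs.simple_mul_simple_cancel_right]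
  have := length_mul_wordProd_le cs v (l ++ alternatingWord i j m)
  rw [hshort] at hi
  simp only [List.length_append, CoxeterSystem.length_alternatingWord] at this
  omega

theorem exists_mul_alternatingWord {w : W} {i j : I}
    (hi : cs.length (w * cs.simple i) = cs.length w + 1)
    (hj : cs.length (w * cs.simple j) + 1 = cs.length w) :
    ∃ (v : W) (k : ℕ), w = v * cs.wordProd (alternatingWord i j k) ∧
      cs.length v < cs.length w ∧ cs.length (v * cs.simple i) = cs.length v + 1 ∧
      cs.length (v * cs.simple j) = cs.length v + 1 ∧ (M i j = 0 ∨ k + 1 ≤ M i j) := by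
  -- split off the longest alternating suffix `⋯ i j` of `w` that keeps lengths additive
  let P (t : ℕ) : Prop :=
    ∃ v, w = v * cs.wordProd (alternatingWord i j t) ∧ cs.length v + t = cs.length w
  have hP1 : P 1 := ⟨w * cs.simple j, by simp [CoxeterSystem.alternatingWord], hj⟩
  have hw1 : 1 ≤ cs.length w := by omega
  obtain ⟨k, hk⟩ := Nat.exists_eq_add_one_of_ne_zero
    (Nat.one_le_iff_ne_zero.mp (Nat.le_findGreatest hw1 hP1))
  obtain ⟨v, hw, hv⟩ : P (k + 1) := hk ▸ Nat.findGreatest_spec hw1 hP1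
  have hmax : ¬P (k + 2) := fun h =>
    Nat.findGreatest_is_greatest (P := P) (n := cs.length w) (by omega)
      (by obtain ⟨_, _, h⟩ := h; omega) h
  set d := if Even k then j else i
  set e := if Even (k + 1) then j else i
  have hvd : v * cs.simple d * cs.wordProd (alternatingWord i j k) = w := by
    rw [hw, CoxeterSystem.alternatingWord_succ', cs.wordProd_cons, mul_assoc]
  have hve : w = v * cs.simple e * cs.wordProd (alternatingWord i j (k + 2)) := by
    rw [hw, CoxeterSystem.alternatingWord_succ' _ _ (k + 1), cs.wordProd_cons, mul_assoc,
      cs.simple_mul_simple_cancel_left]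
  have hd : cs.length (v * cs.simple d) = cs.length v + 1 := by
    have := length_mul_wordProd_le cs (v * cs.simple d) (alternatingWord i j k)
    rw [hvd, CoxeterSystem.length_alternatingWord] at this
    rcases cs.length_mul_simple v d with h | h <;> omega
  have he : cs.length (v * cs.simple e) = cs.length v + 1 :=
    (cs.length_mul_simple v e).resolve_right fun h => hmax ⟨_, hve, by omega⟩
  have hascent : ∀ x, x = i ∨ x = j → cs.length (v * cs.simple x) = cs.length v + 1 := by
    rintro x hx
    by_cases hk : Even k <;> simp only [d, e, hk, Nat.even_add_one, if_true, if_false,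
      not_true, not_false_eq_true] at hd he <;> rcases hx with rfl | rfl <;> assumption
  refine ⟨v, k + 1, hw, by omega, hascent i (.inl rfl), hascent j (.inr rfl),
    eq_zero_or_lt_of_length_mul_alternatingWord (by rw [← hw]; omega) (by rwa [← hw])⟩

end Alternating

namespace GeomRep

variable (gr : GeomRep cs V)

@[simp]
theorem rho_mul_apply (u v : W) (x : V) : gr.ρ (u * v) x = gr.ρ u (gr.ρ v x) := by
  rw [map_mul, Module.End.mul_apply]

@[simp]
theorem rho_one_apply (x : V) : gr.ρ 1 x = x := by
  rw [map_one, Module.End.one_apply]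

theorem rho_injective (u : W) : Function.Injective (gr.ρ u) := fun x y hxy => by
  simpa using congrArg (gr.ρ u⁻¹) hxy

theorem rho_simple_simple (i : I) : gr.ρ (cs.simple i) (gr.α i) = -gr.α i := by
  rw [gr.ρ_simple, gr.norm_one]
  module

@[simp]
theorem rho_simple_rho_simple (i : I) (x : V) :
    gr.ρ (cs.simple i) (gr.ρ (cs.simple i) x) = x := by
  rw [← rho_mul_apply, cs.simple_mul_simple_self, rho_one_apply]

theorem pairing_nonpos {i j : I} (h : i ≠ j) : gr.B (gr.α i) (gr.α j) ≤ 0 := by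
  rcases eq_or_ne (M i j) 0 with hm | hm
  · linarith [gr.pairing_infinite i j hm]
  rw [gr.pairing_finite i j hm, neg_nonpos]
  have hm2 : (2 : ℝ) ≤ M i j := by
    have := M.off_diagonal i j h
    exact_mod_cast (by omega : 2 ≤ M i j)
  apply Real.cos_nonneg_of_mem_Icc
  constructor
  · linarith [Real.pi_pos, show 0 ≤ Real.pi / M i j by positivity]
  · exact div_le_div_of_nonneg_left Real.pi_pos.le two_pos hm2

theorem eq_zero_of_linearCombination_add_eq_zero {f g : I →₀ ℝ} (hf : 0 ≤ f) (hg : 0 ≤ g)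
    (h : Finsupp.linearCombination ℝ gr.α f + Finsupp.linearCombination ℝ gr.α g = 0) :
    f = 0 := by
  rw [← map_add] at h
  exact ((add_eq_zero_iff_of_nonneg hf hg).1 (gr.posIndep _ (add_nonneg hf hg) h)).1

theorem eq_zero_of_add_eq_zero {u v : V} (hu : u ∈ posSpan (Set.range gr.α))
    (hv : v ∈ posSpan (Set.range gr.α)) (h : u + v = 0) : u = 0 := by
  obtain ⟨f, hf, rfl⟩ := exists_nonneg_linearCombination_eq hu
  obtain ⟨g, hg, rfl⟩ := exists_nonneg_linearCombination_eq hv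
  rw [gr.eq_zero_of_linearCombination_add_eq_zero hf hg h, map_zero]

theorem pairing_linearCombination_erase_nonpos {f : I →₀ ℝ} (hf : 0 ≤ f) (i : I) :
    gr.B (gr.α i) (Finsupp.linearCombination ℝ gr.α (f.erase i)) ≤ 0 := by
  rw [Finsupp.linearCombination_apply, Finsupp.sum, map_sum]
  refine Finset.sum_nonpos fun j hj => ?_
  have hji : j ≠ i := fun e => by simp [e] at hj
  rw [map_smul, smul_eq_mul]
  exact mul_nonpos_of_nonneg_of_nonpos (Finsupp.erase_nonneg hf i j) (gr.pairing_nonpos hji.symm)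

theorem linearCombination_eq_add_erase (f : I →₀ ℝ) (i : I) :
    Finsupp.linearCombination ℝ gr.α f =
      f i • gr.α i + Finsupp.linearCombination ℝ gr.α (f.erase i) := by
  conv_lhs => rw [← Finsupp.single_add_erase i f]
  rw [map_add, Finsupp.linearCombination_single]

theorem eq_smul_simple_of_add_eq_smul {u v : V} {i : I} {r : ℝ}
    (hu : u ∈ posSpan (Set.range gr.α)) (hv : v ∈ posSpan (Set.range gr.α))
    (huv : u + v = r • gr.α i) : ∃ a : ℝ, 0 ≤ a ∧ u = a • gr.α i := by
  obtain ⟨f, hf, rfl⟩ := exists_nonneg_linearCombination_eq hu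
  obtain ⟨g, hg, rfl⟩ := exists_nonneg_linearCombination_eq hv
  rw [gr.linearCombination_eq_add_erase f i] at huv ⊢
  rw [gr.linearCombination_eq_add_erase g i] at huv
  set F := Finsupp.linearCombination ℝ gr.α (f.erase i)
  set G := Finsupp.linearCombination ℝ gr.α (g.erase i)
  set t := r - f i - g i
  have hFG : F + G = t • gr.α i := by linear_combination (norm := module) huv
  have ht : t ≤ 0 := by
    have := congrArg (gr.B (gr.α i)) hFG
    rw [map_add, map_smul, gr.norm_one, smul_eq_mul, mul_one] at this
    linarith [gr.pairing_linearCombination_erase_nonpos hf i,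
      gr.pairing_linearCombination_erase_nonpos hg i]
  have hF : f.erase i = 0 := by
    refine gr.eq_zero_of_linearCombination_add_eq_zero (g := g.erase i + Finsupp.single i (-t))
      (Finsupp.erase_nonneg hf i)
      (add_nonneg (Finsupp.erase_nonneg hg i) (Finsupp.single_nonneg.mpr (by linarith))) ?_
    rw [map_add, Finsupp.linearCombination_single, ← add_assoc, hFG]
    module
  exact ⟨f i, hf i, by simp [F, hF]⟩

section RankTwo

open CoxeterSystem (alternatingWord)
open Polynomial Chebyshev

theorem rho_alternatingWord_simple {i j : I} {c : ℝ} (hc : gr.B (gr.α i) (gr.α j) = -c)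
    (k : ℕ) :
    gr.ρ (cs.wordProd (alternatingWord i j k)) (gr.α i) =
      (if Even k then (U ℝ k).eval c else (U ℝ (k - 1)).eval c) • gr.α i +
        (if Even k then (U ℝ (k - 1)).eval c else (U ℝ k).eval c) • gr.α j := by
  induction k with
  | zero => simp [CoxeterSystem.alternatingWord]
  | succ k ih =>
    have hrec := congrArg (eval c) (U_add_one ℝ (k : ℤ))
    simp only [eval_sub, eval_mul, eval_ofNat, eval_X] at hrec
    have hji : gr.B (gr.α j) (gr.α i) = -c := by rw [gr.symm, hc]
    rw [CoxeterSystem.alternatingWord_succ', cs.wordProd_cons, rho_mul_apply, ih]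
    push_cast
    rw [add_sub_cancel_right, hrec]
    by_cases hk : Even k
    · simp only [hk, if_true, Nat.even_add_one, not_true, if_false, gr.ρ_simple, map_add,
        map_smul, smul_eq_mul, gr.norm_one, hji]
      module
    · simp only [hk, if_false, Nat.even_add_one, not_false_eq_true, if_true, gr.ρ_simple,
        map_add, map_smul, smul_eq_mul, gr.norm_one, hc]
      module

theorem exists_rho_alternatingWord_simple_eq {i j : I} (hij : i ≠ j) {k : ℕ}
    (hk : M i j = 0 ∨ k + 1 ≤ M i j) :
    ∃ a b : ℝ, 0 ≤ a ∧ 0 ≤ b ∧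
      gr.ρ (cs.wordProd (alternatingWord i j k)) (gr.α i) = a • gr.α i + b • gr.α j := by
  suffices ∃ c, gr.B (gr.α i) (gr.α j) = -c ∧ 0 ≤ (U ℝ k).eval c ∧
      0 ≤ (U ℝ (k - 1)).eval c by
    obtain ⟨c, hc, hk, hk'⟩ := this
    rw [gr.rho_alternatingWord_simple hc]
    exact ⟨_, _, by split_ifs <;> assumption, by split_ifs <;> assumption, rfl⟩
  rcases hk with hm | hk
  · have hc : 1 ≤ -gr.B (gr.α i) (gr.α j) := by linarith [gr.pairing_infinite i j hm]
    obtain ⟨h₀, h₁⟩ := chebyshevU_eval_sub_one_nonneg_and_le hc k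
    exact ⟨_, (neg_neg _).symm, h₀.trans h₁, h₀⟩
  · have hm2 : 2 ≤ M i j := by
      have := M.off_diagonal i j hij
      omega
    refine ⟨_, gr.pairing_finite i j (by omega), ?_, ?_⟩ <;>
      exact chebyshevU_eval_cos_nonneg hm2 (by omega) (by omega)

end RankTwo

theorem rho_apply_simple_mem_posSpan {w : W} {i : I}
    (h : cs.length (w * cs.simple i) = cs.length w + 1) :
    gr.ρ w (gr.α i) ∈ posSpan (Set.range gr.α) := by
  induction hn : cs.length w using Nat.strong_induction_on generalizing w i with
  | _ n ih =>
  rcases eq_or_ne w 1 with rfl | hw1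
  · simpa using mem_posSpan_of_mem (Set.mem_range_self i)
  obtain ⟨j, hj⟩ := cs.exists_rightDescent_of_ne_one hw1
  have hj' := cs.isRightDescent_iff.mp hj
  have hij : i ≠ j := by rintro rfl; omega
  obtain ⟨v, k, rfl, hvw, hvi, hvj, hk⟩ := exists_mul_alternatingWord h hj'
  obtain ⟨a, b, ha, hb, hab⟩ := gr.exists_rho_alternatingWord_simple_eq hij hk
  rw [rho_mul_apply, hab, map_add, map_smul, map_smul]
  exact posSpan_add (posSpan_smul ha (ih _ (hn ▸ hvw) hvi rfl))
    (posSpan_smul hb (ih _ (hn ▸ hvw) hvj rfl))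

theorem simple_mem_roots (i : I) : gr.α i ∈ gr.roots := ⟨1, i, by simp⟩

theorem rho_mem_roots {x : V} (hx : x ∈ gr.roots) (u : W) : gr.ρ u x ∈ gr.roots := by
  obtain ⟨v, j, rfl⟩ := hx
  exact ⟨u * v, j, by simp⟩

theorem pairing_self_of_mem_roots {x : V} (hx : x ∈ gr.roots) : gr.B x x = 1 := by
  obtain ⟨w, j, rfl⟩ := hx
  rw [gr.ρ_isom, gr.norm_one]

theorem simple_mem_posRoots (i : I) : gr.α i ∈ gr.posRoots :=
  ⟨gr.simple_mem_roots i, mem_posSpan_of_mem ⟨i, rfl⟩⟩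

theorem rho_apply_simple_mem_posRoots {w : W} {i : I}
    (h : cs.length (w * cs.simple i) = cs.length w + 1) : gr.ρ w (gr.α i) ∈ gr.posRoots :=
  ⟨gr.rho_mem_roots (gr.simple_mem_roots i) w, gr.rho_apply_simple_mem_posSpan h⟩

theorem neg_notMem_posRoots {x : V} (hx : x ∈ gr.posRoots) : -x ∉ gr.posRoots := fun hx' => by
  have h1 := gr.pairing_self_of_mem_roots hx.1
  simp [gr.eq_zero_of_add_eq_zero hx.2 hx'.2 (add_neg_cancel x)] at h1

theorem mem_posRoots_or_neg_mem_posRoots {x : V} (hx : x ∈ gr.roots) :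
    x ∈ gr.posRoots ∨ -x ∈ gr.posRoots := by
  obtain ⟨w, i, rfl⟩ := hx
  rcases cs.length_mul_simple w i with h | h
  · exact .inl (gr.rho_apply_simple_mem_posRoots h)
  · right
    have h' : cs.length (w * cs.simple i * cs.simple i) = cs.length (w * cs.simple i) + 1 := by
      rw [cs.simple_mul_simple_cancel_right]
      omega
    simpa [rho_simple_simple] using gr.rho_apply_simple_mem_posRoots h'

theorem eq_simple_of_eq_smul {x : V} (hx : x ∈ gr.roots) {i : I} {a : ℝ} (ha : 0 ≤ a)
    (hxa : x = a • gr.α i) : x = gr.α i := by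
  have h1 := gr.pairing_self_of_mem_roots hx
  simp only [hxa, map_smul, LinearMap.smul_apply, smul_eq_mul, gr.norm_one] at h1
  rw [hxa, show a = 1 by nlinarith, one_smul]

theorem rho_simple_apply_mem_posRoots {x : V} {i : I} (hx : x ∈ gr.posRoots)
    (hxi : x ≠ gr.α i) : gr.ρ (cs.simple i) x ∈ gr.posRoots := by
  refine (gr.mem_posRoots_or_neg_mem_posRoots (gr.rho_mem_roots hx.1 _)).resolve_right
    fun hneg => hxi ?_
  -- `x` and `-s(x)` are nonnegative combinations of simple roots adding up to a multiple of `α_i`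
  have hsum : x + -gr.ρ (cs.simple i) x = (2 * gr.B (gr.α i) x) • gr.α i := by
    rw [gr.ρ_simple]
    abel
  obtain ⟨a, ha, hxa⟩ := gr.eq_smul_simple_of_add_eq_smul hx.2 hneg.2 hsum
  exact gr.eq_simple_of_eq_smul hx.1 ha hxa

theorem rho_simple_apply_ne_simple {x : V} {i : I} (hx : x ∈ gr.posRoots) :
    gr.ρ (cs.simple i) x ≠ gr.α i := fun h => by
  have : x = -gr.α i := by rw [← rho_simple_rho_simple gr i x, h, rho_simple_simple]
  exact gr.neg_notMem_posRoots (gr.simple_mem_posRoots i) (this ▸ hx)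

theorem rho_mem_invSet_iff {u w : W} {x : V} (hx : x ∈ gr.posRoots)
    (hux : gr.ρ u x ∈ gr.posRoots) :
    gr.ρ u x ∈ gr.invSet w ↔ x ∈ gr.invSet (u⁻¹ * w) := by
  show (_ ∧ _) ↔ (_ ∧ _)
  rw [mul_inv_rev, inv_inv, rho_mul_apply]
  simp only [hx, hux, true_and]

section SimpleMul

variable {i : I} {w : W} (h : cs.length (cs.simple i * w) = cs.length w + 1)
include h

theorem rho_inv_apply_simple_mem_posRoots : gr.ρ w⁻¹ (gr.α i) ∈ gr.posRoots := by
  refine gr.rho_apply_simple_mem_posRoots ?_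
  rwa [← cs.inv_simple i, ← mul_inv_rev, cs.length_inv, cs.length_inv]

theorem simple_notMem_invSet : gr.α i ∉ gr.invSet w := fun hα =>
  gr.neg_notMem_posRoots (gr.rho_inv_apply_simple_mem_posRoots h) hα.2

theorem simple_mem_invSet_simple_mul : gr.α i ∈ gr.invSet (cs.simple i * w) := by
  refine ⟨gr.simple_mem_posRoots i, ?_⟩
  rw [mul_inv_rev, cs.inv_simple, rho_mul_apply, rho_simple_simple, map_neg, Set.mem_neg,
    neg_neg]
  exact gr.rho_inv_apply_simple_mem_posRoots h

theorem invSet_simple_mul :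
    gr.invSet (cs.simple i * w) = insert (gr.α i) (gr.ρ (cs.simple i) '' gr.invSet w) := by
  ext x
  constructor
  · intro hx
    rcases eq_or_ne x (gr.α i) with rfl | hxi
    · exact Set.mem_insert _ _
    have hsx := gr.rho_simple_apply_mem_posRoots hx.1 hxi
    refine .inr ⟨_, ?_, rho_simple_rho_simple gr i x⟩
    have := (gr.rho_mem_invSet_iff (u := cs.simple i) hsx (by simpa using hx.1)).1
      (by simpa using hx)
    rwa [cs.inv_simple, cs.simple_mul_simple_cancel_left] at this
  · rintro (rfl | ⟨β, hβ, rfl⟩)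
    · exact gr.simple_mem_invSet_simple_mul h
    have hβi : β ≠ gr.α i := fun e => gr.simple_notMem_invSet h (e ▸ hβ)
    refine (gr.rho_mem_invSet_iff hβ.1 (gr.rho_simple_apply_mem_posRoots hβ.1 hβi)).2 ?_
    rwa [cs.inv_simple, cs.simple_mul_simple_cancel_left]

end SimpleMul

theorem dominates_rho {u : W} {a b : V} (h : gr.dominates a b) (hua : gr.ρ u a ∈ gr.posRoots)
    (hb : b ∈ gr.posRoots) : gr.dominates (gr.ρ u a) (gr.ρ u b) := fun w hw => by
  have ha := h _ ((gr.rho_mem_invSet_iff hb hw.1).1 hw)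
  exact (gr.rho_mem_invSet_iff ha.1 hua).2 ha

theorem mapsTo_rho_simple_domSet {i : I} {b : V} (hb : b ∈ gr.posRoots) :
    Set.MapsTo (gr.ρ (cs.simple i)) (gr.domSet b \ {gr.α i})
      (gr.domSet (gr.ρ (cs.simple i) b) \ {gr.α i}) := by
  rintro a ⟨⟨ha, hab, hne⟩, hai⟩
  have hsa := gr.rho_simple_apply_mem_posRoots ha hai
  exact ⟨⟨hsa, gr.dominates_rho hab hsa hb, (gr.rho_injective _).ne hne⟩,
    gr.rho_simple_apply_ne_simple ha⟩

theorem dpInf_le_dpInf_rho_simple {i : I} {b : V} (hb : b ∈ gr.posRoots) (hbi : b ≠ gr.α i)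
    (hdom : ¬gr.dominates (gr.α i) b) : gr.dpInf b ≤ gr.dpInf (gr.ρ (cs.simple i) b) := by
  have hsb := gr.rho_simple_apply_mem_posRoots hb hbi
  have hbij : Set.BijOn (gr.ρ (cs.simple i)) (gr.domSet b \ {gr.α i})
      (gr.domSet (gr.ρ (cs.simple i) b) \ {gr.α i}) :=
    Set.InvOn.bijOn ⟨fun x _ => gr.rho_simple_rho_simple i x,
      fun x _ => gr.rho_simple_rho_simple i x⟩ (gr.mapsTo_rho_simple_domSet hb)
      (by simpa using gr.mapsTo_rho_simple_domSet (i := i) hsb)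
  calc gr.dpInf b = (gr.domSet b \ {gr.α i}).ncard := by
        rw [Set.sdiff_singleton_eq_self fun h => hdom h.2.1]
        rfl
    _ = _ := hbij.ncard_eq
    _ ≤ gr.dpInf _ := Set.ncard_sdiff_singleton_le _ _

theorem dpInf_simple (i : I) : gr.dpInf (gr.α i) = 0 := by
  suffices gr.domSet (gr.α i) = ∅ by rw [dpInf, this, Set.ncard_empty]
  refine Set.eq_empty_of_forall_notMem fun a ⟨ha, hdom, hne⟩ => ?_
  have hα := gr.simple_mem_invSet_simple_mul (i := i) (w := 1) (by simp)
  rw [mul_one] at hα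
  have := (hdom _ hα).2
  rw [cs.inv_simple, Set.mem_neg] at this
  exact gr.neg_notMem_posRoots (gr.rho_simple_apply_mem_posRoots ha hne) this

theorem simple_mem_smallRoots (i : I) (n : ℕ) : gr.α i ∈ gr.smallRoots n :=
  ⟨gr.simple_mem_posRoots i, by rw [gr.dpInf_simple]; exact Nat.zero_le n⟩

theorem mem_smallRoots_of_rho_simple_mem {i : I} {w : W} {n : ℕ} {β : V}
    (h : cs.length (cs.simple i * w) = cs.length w + 1) (hβ : β ∈ gr.invSet w)
    (hsβ : gr.ρ (cs.simple i) β ∈ gr.smallRoots n) : β ∈ gr.smallRoots n := by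
  have hβi : β ≠ gr.α i := fun e => gr.simple_notMem_invSet h (e ▸ hβ)
  have hdom : ¬gr.dominates (gr.α i) β := fun hdom => gr.simple_notMem_invSet h (hdom w hβ)
  exact ⟨hβ.1, (gr.dpInf_le_dpInf_rho_simple hβ.1 hβi hdom).trans hsβ.2⟩

end GeomRep

/-- If `ℓ(sw) > ℓ(w)` then `Σ_n(sw) = {α_s} ⊔ (Σ_n ∩ s(Σ_n(w)))`. -/
theorem smallInv_of_mul_simple (gr : GeomRep cs V) (i : I) (w : W) (n : ℕ)
    (h : cs.length (cs.simple i * w) = cs.length w + 1) :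
    gr.invSet (cs.simple i * w) ∩ gr.smallRoots n =
        insert (gr.α i)
          (gr.smallRoots n ∩ (⇑(gr.ρ (cs.simple i)) '' (gr.invSet w ∩ gr.smallRoots n))) ∧
      gr.α i ∉
        gr.smallRoots n ∩ (⇑(gr.ρ (cs.simple i)) '' (gr.invSet w ∩ gr.smallRoots n)) := by
  refine ⟨?_, fun ⟨_, β, hβ, hβα⟩ => gr.rho_simple_apply_ne_simple hβ.1.1 hβα⟩
  rw [gr.invSet_simple_mul h, Set.insert_inter_of_mem (gr.simple_mem_smallRoots i n)]
  congr 1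
  ext x
  constructor
  · rintro ⟨⟨β, hβ, rfl⟩, hx⟩
    exact ⟨hx, β, ⟨hβ, gr.mem_smallRoots_of_rho_simple_mem h hβ hx⟩, rfl⟩
  · rintro ⟨hx, β, ⟨hβ, -⟩, rfl⟩
    exact ⟨⟨β, hβ, rfl⟩, hx⟩

end CoxGar
end
end
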